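/- arXiv:2505.16808 — 3 statements merged into one kernel-verified Lean document; each statement's English description precedes it below -/
import Mathlib

section
/- Let (G,σ) be obtained from a positive triangle u_1u_2u_3 by adding an inner triangle u_1'u_2'u_3' with negative edges u_1'u_2', u_2'u_3', u_3'u_1', positive edges u_iu_i' for each i, and negative edges u_iu_{j}' for the two cross connections as in the gadget (so that the triangles u_iu_{i+1}u_{i+2}' type faces are negative). Suppose a balanced (2k,k)-coloring of (G,σ) has the property that every negative facial triangle is hit by every color. Then no color appears on all three of u_1, u_2, u_3. -/
open SimpleGraph

/-- A set of vertices of a signed graph `(G, σ)` (where `σ e = false` means the edge `e` is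
negative) is balanced if it induces no negative cycle. -/
def BalancedSet {V : Type*} (G : SimpleGraph V) (σ : Sym2 V → Bool) (S : Set V) : Prop :=
  ¬ ∃ (v : V) (c : G.Walk v v), c.IsCycle ∧ (∀ x ∈ c.support, x ∈ S) ∧
    Odd ((c.edges.filter (fun e => σ e = false)).length)

/-- Positive edges of the mini-gadget: the outer triangle `u₁u₂u₃` (vertices `0,1,2`) and the
matching edges `uᵢuᵢ'` (where `uᵢ' = i + 3`). -/
def posEdges6 : Finset (Sym2 (Fin 6)) := {s(0, 1), s(1, 2), s(0, 2), s(0, 3), s(1, 4), s(2, 5)}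

/-- Negative edges of the mini-gadget: the inner triangle `u₁'u₂'u₃'` (vertices `3,4,5`) and
the cross edges `u₁u₃'`, `u₂u₁'`, `u₃u₂'`. -/
def negEdges6 : Finset (Sym2 (Fin 6)) := {s(3, 4), s(4, 5), s(3, 5), s(0, 5), s(1, 3), s(2, 4)}

/-- The underlying graph of the mini-gadget of Figure 1. -/
def G6 : SimpleGraph (Fin 6) := SimpleGraph.fromEdgeSet ↑(posEdges6 ∪ negEdges6)

/-- The signature of the mini-gadget (`true` = positive). -/
def σ6 : Sym2 (Fin 6) → Bool := fun e => decide (e ∈ posEdges6)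


lemma adj6 {a b : Fin 6} (h : s(a,b) ∈ posEdges6 ∪ negEdges6) (hne : a ≠ b) : G6.Adj a b := by
  rw [G6, fromEdgeSet_adj]; exact ⟨by simpa using h, hne⟩

lemma tri_cycle {a b d : Fin 6} (h1 : G6.Adj a b) (h2 : G6.Adj b d) (h3 : G6.Adj d a)
    (had : a ≠ d) :
    (Walk.cons h1 (Walk.cons h2 (Walk.cons h3 Walk.nil))).IsCycle := by
  refine ⟨⟨⟨?_⟩, by simp⟩, ?_⟩
  · simp [Walk.edges, h1.ne, h2.ne, h3.ne, had, h1.ne', h2.ne', h3.ne', had.symm, Sym2.eq_iff]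
  · simp [h1.ne, h2.ne, h3.ne, had, h1.ne', h2.ne', h3.ne', had.symm]

/-- In the mini-gadget, if a balanced `(2k, k)`-coloring has the property that every negative
facial triangle (the inner triangle `u₁'u₂'u₃'` together with `u₁u₃u₃'`, `u₁u₂u₁'`, `u₂u₃u₂'`)
is hit by every color, then no color appears on all three of `u₁, u₂, u₃`. -/
theorem stmt3 (k : ℕ) (hk : 0 < k) (c : Fin 6 → Finset (Fin (2 * k)))
    (hcard : ∀ v, (c v).card = k)
    (hbal : ∀ i : Fin (2 * k), BalancedSet G6 σ6 {v | i ∈ c v})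
    (hhit : ∀ T : Finset (Fin 6),
      T ∈ ({({3, 4, 5} : Finset (Fin 6)), {0, 2, 5}, {0, 1, 3}, {1, 2, 4}} :
        Finset (Finset (Fin 6))) →
      ∀ i : Fin (2 * k), ∃ v ∈ T, i ∈ c v) :
    ∀ i : Fin (2 * k), ¬ (i ∈ c 0 ∧ i ∈ c 1 ∧ i ∈ c 2) := by
  rintro i ⟨h0, h1, h2⟩
  obtain ⟨v, hv, hvc⟩ := hhit {3,4,5} (by decide) i
  simp only [Finset.mem_insert, Finset.mem_singleton] at hv
  rcases hv with rfl | rfl | rfl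
  · have e1 : G6.Adj 0 1 := adj6 (by decide) (by decide)
    have e2 : G6.Adj 1 3 := adj6 (by decide) (by decide)
    have e3 : G6.Adj 3 0 := adj6 (by decide) (by decide)
    exact hbal i ⟨0, .cons e1 (.cons e2 (.cons e3 .nil)), tri_cycle e1 e2 e3 (by decide),
      by intro x hx; simp [Walk.support] at hx; rcases hx with rfl|rfl|rfl|rfl <;> assumption,
      by simp only [Walk.edges_cons, Walk.edges_nil]; decide⟩
  · have e1 : G6.Adj 1 2 := adj6 (by decide) (by decide)
    have e2 : G6.Adj 2 4 := adj6 (by decide) (by decide)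
    have e3 : G6.Adj 4 1 := adj6 (by decide) (by decide)
    exact hbal i ⟨1, .cons e1 (.cons e2 (.cons e3 .nil)), tri_cycle e1 e2 e3 (by decide),
      by intro x hx; simp [Walk.support] at hx; rcases hx with rfl|rfl|rfl|rfl <;> assumption,
      by simp only [Walk.edges_cons, Walk.edges_nil]; decide⟩
  · have e1 : G6.Adj 0 2 := adj6 (by decide) (by decide)
    have e2 : G6.Adj 2 5 := adj6 (by decide) (by decide)
    have e3 : G6.Adj 5 0 := adj6 (by decide) (by decide)
    exact hbal i ⟨0, .cons e1 (.cons e2 (.cons e3 .nil)), tri_cycle e1 e2 e3 (by decide),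
      by intro x hx; simp [Walk.support] at hx; rcases hx with rfl|rfl|rfl|rfl <;> assumption,
      by simp only [Walk.edges_cons, Walk.edges_nil]; decide⟩
end

section
/- Let Ŵ be the 10-vertex signed planar graph of Figure 2 (on vertices u, v, w, z, t, x_1,...,x_5, with the indicated signature). In any balanced (2k,k)-coloring of Ŵ in which every one of the seven facial triangles ux_1x_2, vx_3x_4, wx_1x_2, wx_1x_5, wx_3x_4, zx_2x_3, tx_4x_5 satisfies the triangle property (negative triangles are hit by every color; positive triangles have no color on all three vertices), the color sets of u and v are disjoint. -/
open SimpleGraph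

/- Vertices of the gadget `Ŵ` of Figure 2: `0 = u`, `1 = v`, `2 = w`, `3 = z`, `4 = t`,
`5 = x₁`, `6 = x₂`, `7 = x₃`, `8 = x₄`, `9 = x₅`. -/

/-- The positive edges of `Ŵ`: `ux₂` and `vx₄`. -/
def posEdgesW : Finset (Sym2 (Fin 10)) := {s(0, 6), s(1, 8)}

/-- The negative edges of `Ŵ`: `wxᵢ` for `i = 1..5`, the 5-cycle `x₁x₂x₃x₄x₅`,
`zx₂, zx₃, zv, zu`, `tx₄, tx₅, tv, tu`, `ux₁, ux₅, uv`, `vx₃`. -/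
def negEdgesW : Finset (Sym2 (Fin 10)) :=
  {s(2, 5), s(2, 6), s(2, 7), s(2, 8), s(2, 9),
   s(5, 6), s(6, 7), s(7, 8), s(8, 9), s(5, 9),
   s(3, 6), s(3, 7), s(3, 1), s(3, 0),
   s(4, 8), s(4, 9), s(4, 1), s(4, 0),
   s(0, 5), s(0, 9), s(0, 1), s(1, 7)}

/-- The underlying graph of the gadget `Ŵ` of Figure 2. -/
def GW : SimpleGraph (Fin 10) := SimpleGraph.fromEdgeSet ↑(posEdgesW ∪ negEdgesW)

/-- The signature of `Ŵ` (`true` = positive). -/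
def σW : Sym2 (Fin 10) → Bool := fun e => decide (e ∈ posEdgesW)

instance : DecidableRel GW.Adj := fun a b =>
  decidable_of_iff (s(a,b) ∈ posEdgesW ∪ negEdgesW ∧ a ≠ b)
    (by rw [GW, fromEdgeSet_adj]; simp)

def walkA : GW.Walk 0 0 := Walk.cons (show GW.Adj 0 1 by decide) (Walk.cons (show GW.Adj 1 3 by decide) (Walk.cons (show GW.Adj 3 0 by decide) (Walk.nil)))

lemma cycA : walkA.IsCycle := by
  rw [SimpleGraph.Walk.isCycle_def, SimpleGraph.Walk.isTrail_def]
  refine ⟨by decide, by decide, by decide⟩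

lemma supA : walkA.support = [0, 1, 3, 0] := by decide

lemma oddA : Odd ((walkA.edges.filter (fun e => σW e = false)).length) := by decide

def walkB : GW.Walk 0 0 := Walk.cons (show GW.Adj 0 1 by decide) (Walk.cons (show GW.Adj 1 4 by decide) (Walk.cons (show GW.Adj 4 0 by decide) (Walk.nil)))

lemma cycB : walkB.IsCycle := by
  rw [SimpleGraph.Walk.isCycle_def, SimpleGraph.Walk.isTrail_def]
  refine ⟨by decide, by decide, by decide⟩

lemma supB : walkB.support = [0, 1, 4, 0] := by decide

lemma oddB : Odd ((walkB.edges.filter (fun e => σW e = false)).length) := by decide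

def walkC : GW.Walk 0 0 := Walk.cons (show GW.Adj 0 5 by decide) (Walk.cons (show GW.Adj 5 9 by decide) (Walk.cons (show GW.Adj 9 0 by decide) (Walk.nil)))

lemma cycC : walkC.IsCycle := by
  rw [SimpleGraph.Walk.isCycle_def, SimpleGraph.Walk.isTrail_def]
  refine ⟨by decide, by decide, by decide⟩

lemma supC : walkC.support = [0, 5, 9, 0] := by decide

lemma oddC : Odd ((walkC.edges.filter (fun e => σW e = false)).length) := by decide

def walkD : GW.Walk 0 0 := Walk.cons (show GW.Adj 0 1 by decide) (Walk.cons (show GW.Adj 1 7 by decide) (Walk.cons (show GW.Adj 7 2 by decide) (Walk.cons (show GW.Adj 2 9 by decide) (Walk.cons (show GW.Adj 9 0 by decide) (Walk.nil)))))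

lemma cycD : walkD.IsCycle := by
  rw [SimpleGraph.Walk.isCycle_def, SimpleGraph.Walk.isTrail_def]
  refine ⟨by decide, by decide, by decide⟩

lemma supD : walkD.support = [0, 1, 7, 2, 9, 0] := by decide

lemma oddD : Odd ((walkD.edges.filter (fun e => σW e = false)).length) := by decide

def walkE : GW.Walk 0 0 := Walk.cons (show GW.Adj 0 6 by decide) (Walk.cons (show GW.Adj 6 7 by decide) (Walk.cons (show GW.Adj 7 1 by decide) (Walk.cons (show GW.Adj 1 0 by decide) (Walk.nil))))

lemma cycE : walkE.IsCycle := by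
  rw [SimpleGraph.Walk.isCycle_def, SimpleGraph.Walk.isTrail_def]
  refine ⟨by decide, by decide, by decide⟩

lemma supE : walkE.support = [0, 6, 7, 1, 0] := by decide

lemma oddE : Odd ((walkE.edges.filter (fun e => σW e = false)).length) := by decide

def walkF : GW.Walk 0 0 := Walk.cons (show GW.Adj 0 9 by decide) (Walk.cons (show GW.Adj 9 8 by decide) (Walk.cons (show GW.Adj 8 1 by decide) (Walk.cons (show GW.Adj 1 0 by decide) (Walk.nil))))

lemma cycF : walkF.IsCycle := by
  rw [SimpleGraph.Walk.isCycle_def, SimpleGraph.Walk.isTrail_def]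
  refine ⟨by decide, by decide, by decide⟩

lemma supF : walkF.support = [0, 9, 8, 1, 0] := by decide

lemma oddF : Odd ((walkF.edges.filter (fun e => σW e = false)).length) := by decide

def walkG : GW.Walk 0 0 := Walk.cons (show GW.Adj 0 6 by decide) (Walk.cons (show GW.Adj 6 2 by decide) (Walk.cons (show GW.Adj 2 8 by decide) (Walk.cons (show GW.Adj 8 1 by decide) (Walk.cons (show GW.Adj 1 0 by decide) (Walk.nil)))))

lemma cycG : walkG.IsCycle := by
  rw [SimpleGraph.Walk.isCycle_def, SimpleGraph.Walk.isTrail_def]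
  refine ⟨by decide, by decide, by decide⟩

lemma supG : walkG.support = [0, 6, 2, 8, 1, 0] := by decide

lemma oddG : Odd ((walkG.edges.filter (fun e => σW e = false)).length) := by decide

def walkH : GW.Walk 0 0 := Walk.cons (show GW.Adj 0 9 by decide) (Walk.cons (show GW.Adj 9 2 by decide) (Walk.cons (show GW.Adj 2 6 by decide) (Walk.cons (show GW.Adj 6 0 by decide) (Walk.nil))))

lemma cycH : walkH.IsCycle := by
  rw [SimpleGraph.Walk.isCycle_def, SimpleGraph.Walk.isTrail_def]
  refine ⟨by decide, by decide, by decide⟩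

lemma supH : walkH.support = [0, 9, 2, 6, 0] := by decide

lemma oddH : Odd ((walkH.edges.filter (fun e => σW e = false)).length) := by decide

/-- In any balanced `(2k, k)`-coloring of `Ŵ` in which each of the seven facial triangles
`ux₁x₂`, `vx₃x₄` (positive: no color on all three vertices) and `wx₁x₂`, `wx₁x₅`, `wx₃x₄`,
`zx₂x₃`, `tx₄x₅` (negative: hit by every color) satisfies the triangle property, the color
sets of `u` and `v` are disjoint. -/
theorem stmt4 (k : ℕ) (hk : 0 < k) (c : Fin 10 → Finset (Fin (2 * k)))
    (hcard : ∀ v, (c v).card = k)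
    (hbal : ∀ i : Fin (2 * k), BalancedSet GW σW {v | i ∈ c v})
    (hposu : ∀ i : Fin (2 * k), ¬ (i ∈ c 0 ∧ i ∈ c 5 ∧ i ∈ c 6))
    (hposv : ∀ i : Fin (2 * k), ¬ (i ∈ c 1 ∧ i ∈ c 7 ∧ i ∈ c 8))
    (hneg : ∀ T : Finset (Fin 10),
      T ∈ ({({2, 5, 6} : Finset (Fin 10)), {2, 5, 9}, {2, 7, 8}, {3, 6, 7}, {4, 8, 9}} :
        Finset (Finset (Fin 10))) →
      ∀ i : Fin (2 * k), ∃ v ∈ T, i ∈ c v) :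
    Disjoint (c 0) (c 1) := by
  rw [Finset.disjoint_left]
  intro i hi0 hi1
  have key : ∀ (p : GW.Walk 0 0), p.IsCycle → (∀ x ∈ p.support, i ∈ c x) →
      Odd ((p.edges.filter (fun e => σW e = false)).length) → False :=
    fun p h1 h2 h3 => hbal i ⟨0, p, h1, h2, h3⟩
  have h3 : i ∉ c 3 := fun h => key walkA cycA
    (by rw [supA]; intro x hx; fin_cases hx <;> assumption) oddA
  have h4 : i ∉ c 4 := fun h => key walkB cycB
    (by rw [supB]; intro x hx; fin_cases hx <;> assumption) oddB
  have h67 : i ∈ c 6 ∨ i ∈ c 7 := by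
    obtain ⟨v, hv, hiv⟩ := hneg {3, 6, 7} (by decide) i
    fin_cases hv
    · exact absurd hiv h3
    · exact Or.inl hiv
    · exact Or.inr hiv
  have h89 : i ∈ c 8 ∨ i ∈ c 9 := by
    obtain ⟨v, hv, hiv⟩ := hneg {4, 8, 9} (by decide) i
    fin_cases hv
    · exact absurd hiv h4
    · exact Or.inl hiv
    · exact Or.inr hiv
  rcases h67 with h6 | h7
  · -- i ∈ c 6
    have h5 : i ∉ c 5 := fun h => hposu i ⟨hi0, h, h6⟩
    rcases h89 with h8 | h9
    · obtain ⟨v, hv, hiv⟩ := hneg {2, 5, 9} (by decide) i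
      simp only [Finset.mem_insert, Finset.mem_singleton] at hv
      rcases hv with rfl | rfl | rfl
      · exact key walkG cycG
          (by rw [supG]; intro x hx; fin_cases hx <;>
            assumption) oddG
      · exact h5 hiv
      · exact key walkF cycF
          (by rw [supF]; intro x hx; fin_cases hx <;>
            assumption) oddF
    · obtain ⟨v, hv, hiv⟩ := hneg {2, 7, 8} (by decide) i
      simp only [Finset.mem_insert, Finset.mem_singleton] at hv
      rcases hv with rfl | rfl | rfl
      · exact key walkH cycH
          (by rw [supH]; intro x hx; fin_cases hx <;>
            assumption) oddH
      · exact key walkE cycE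
          (by rw [supE]; intro x hx; fin_cases hx <;>
            assumption) oddE
      · exact key walkF cycF
          (by rw [supF]; intro x hx; fin_cases hx <;>
            assumption) oddF
  · -- i ∈ c 7
    have h8 : i ∉ c 8 := fun h => hposv i ⟨hi1, h7, h⟩
    have h9 : i ∈ c 9 := h89.resolve_left h8
    have h5 : i ∉ c 5 := fun h => key walkC cycC
      (by rw [supC]; intro x hx; fin_cases hx <;>
        assumption) oddC
    obtain ⟨v, hv, hiv⟩ := hneg {2, 5, 6} (by decide) i
    simp only [Finset.mem_insert, Finset.mem_singleton] at hv
    rcases hv with rfl | rfl | rfl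
    · exact key walkD cycD
        (by rw [supD]; intro x hx; fin_cases hx <;>
          assumption) oddD
    · exact h5 hiv
    · exact key walkE cycE
        (by rw [supE]; intro x hx; fin_cases hx <;>
          assumption) oddE
end

section
/- Every balanced set of the signed graph Ŵ of Figure 2 that contains both u and v either contains all three vertices of one of the two positive triangles ux_1x_2, vx_3x_4, or is disjoint from one of the five negative triangles wx_1x_2, wx_1x_5, wx_3x_4, zx_2x_3, tx_4x_5. -/
open SimpleGraph

lemma hadjW (a b : Fin 10) (h : s(a,b) ∈ posEdgesW ∪ negEdgesW := by decide)
    (hne : a ≠ b := by decide) : GW.Adj a b := by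
  rw [GW, SimpleGraph.fromEdgeSet_adj]; exact ⟨by exact_mod_cast h, hne⟩

def cW013 : GW.Walk 0 0 := .cons (hadjW 0 1) (.cons (hadjW 1 3) (.cons (hadjW 3 0) .nil))
def cW014 : GW.Walk 0 0 := .cons (hadjW 0 1) (.cons (hadjW 1 4) (.cons (hadjW 4 0) .nil))
def cW059 : GW.Walk 0 0 := .cons (hadjW 0 5) (.cons (hadjW 5 9) (.cons (hadjW 9 0) .nil))
def cW0671 : GW.Walk 0 0 :=
  .cons (hadjW 0 6) (.cons (hadjW 6 7) (.cons (hadjW 7 1) (.cons (hadjW 1 0) .nil)))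
def cW0981 : GW.Walk 0 0 :=
  .cons (hadjW 0 9) (.cons (hadjW 9 8) (.cons (hadjW 8 1) (.cons (hadjW 1 0) .nil)))
def cW0629 : GW.Walk 0 0 :=
  .cons (hadjW 0 6) (.cons (hadjW 6 2) (.cons (hadjW 2 9) (.cons (hadjW 9 0) .nil)))
def cW01729 : GW.Walk 0 0 :=
  .cons (hadjW 0 1) (.cons (hadjW 1 7) (.cons (hadjW 7 2)
    (.cons (hadjW 2 9) (.cons (hadjW 9 0) .nil))))
def cW06281 : GW.Walk 0 0 :=
  .cons (hadjW 0 6) (.cons (hadjW 6 2) (.cons (hadjW 2 8)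
    (.cons (hadjW 8 1) (.cons (hadjW 1 0) .nil))))

lemma useCycleW {S : Set (Fin 10)} (hbal : BalancedSet GW σW S) {v : Fin 10}
    (c : GW.Walk v v) (h1 : c.IsCycle) (h2 : ∀ x ∈ c.support, x ∈ S)
    (h3 : Odd ((c.edges.filter (fun e => σW e = false)).length)) : False :=
  hbal ⟨v, c, h1, h2, h3⟩


lemma notDisjW {a b c : Fin 10} {S : Set (Fin 10)} (h : ¬ Disjoint S {a, b, c}) :
    a ∈ S ∨ b ∈ S ∨ c ∈ S := by
  rw [Set.not_disjoint_iff] at h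
  obtain ⟨x, hx, hm⟩ := h
  simp only [Set.mem_insert_iff, Set.mem_singleton_iff] at hm
  rcases hm with rfl | rfl | rfl
  · exact Or.inl hx
  · exact Or.inr (Or.inl hx)
  · exact Or.inr (Or.inr hx)

lemma negcyc013 {S : Set (Fin 10)} (hbal : BalancedSet GW σW S)
    (h0 : (0:Fin 10) ∈ S) (h1 : (1:Fin 10) ∈ S) (h3 : (3:Fin 10) ∈ S) : False := by
  refine useCycleW hbal cW013 ?_ ?_ ?_
  · refine ⟨⟨⟨?_⟩, ?_⟩, ?_⟩ <;> simp [cW013] <;> decide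
  · intro x hx; simp [cW013] at hx; rcases hx with rfl | rfl | rfl | rfl <;> assumption
  · simp only [cW013, SimpleGraph.Walk.edges_cons, SimpleGraph.Walk.edges_nil]; decide

lemma negcyc014 {S : Set (Fin 10)} (hbal : BalancedSet GW σW S)
    (h0 : (0:Fin 10) ∈ S) (h1 : (1:Fin 10) ∈ S) (h4 : (4:Fin 10) ∈ S) : False := by
  refine useCycleW hbal cW014 ?_ ?_ ?_
  · refine ⟨⟨⟨?_⟩, ?_⟩, ?_⟩ <;> simp [cW014] <;> decide
  · intro x hx; simp [cW014] at hx; rcases hx with rfl | rfl | rfl | rfl <;> assumption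
  · simp only [cW014, SimpleGraph.Walk.edges_cons, SimpleGraph.Walk.edges_nil]; decide

lemma negcyc059 {S : Set (Fin 10)} (hbal : BalancedSet GW σW S)
    (h0 : (0:Fin 10) ∈ S) (h5 : (5:Fin 10) ∈ S) (h9 : (9:Fin 10) ∈ S) : False := by
  refine useCycleW hbal cW059 ?_ ?_ ?_
  · refine ⟨⟨⟨?_⟩, ?_⟩, ?_⟩ <;> simp [cW059] <;> decide
  · intro x hx; simp [cW059] at hx; rcases hx with rfl | rfl | rfl | rfl <;> assumption
  · simp only [cW059, SimpleGraph.Walk.edges_cons, SimpleGraph.Walk.edges_nil]; decide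

lemma negcyc0671 {S : Set (Fin 10)} (hbal : BalancedSet GW σW S)
    (h0 : (0:Fin 10) ∈ S) (h1 : (1:Fin 10) ∈ S) (h6 : (6:Fin 10) ∈ S)
    (h7 : (7:Fin 10) ∈ S) : False := by
  refine useCycleW hbal cW0671 ?_ ?_ ?_
  · refine ⟨⟨⟨?_⟩, ?_⟩, ?_⟩ <;> simp [cW0671] <;> decide
  · intro x hx; simp [cW0671] at hx; rcases hx with rfl | rfl | rfl | rfl | rfl <;> assumption
  · simp only [cW0671, SimpleGraph.Walk.edges_cons, SimpleGraph.Walk.edges_nil]; decide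

lemma negcyc0981 {S : Set (Fin 10)} (hbal : BalancedSet GW σW S)
    (h0 : (0:Fin 10) ∈ S) (h1 : (1:Fin 10) ∈ S) (h8 : (8:Fin 10) ∈ S)
    (h9 : (9:Fin 10) ∈ S) : False := by
  refine useCycleW hbal cW0981 ?_ ?_ ?_
  · refine ⟨⟨⟨?_⟩, ?_⟩, ?_⟩ <;> simp [cW0981] <;> decide
  · intro x hx; simp [cW0981] at hx; rcases hx with rfl | rfl | rfl | rfl | rfl <;> assumption
  · simp only [cW0981, SimpleGraph.Walk.edges_cons, SimpleGraph.Walk.edges_nil]; decide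

lemma negcyc0629 {S : Set (Fin 10)} (hbal : BalancedSet GW σW S)
    (h0 : (0:Fin 10) ∈ S) (h2 : (2:Fin 10) ∈ S) (h6 : (6:Fin 10) ∈ S)
    (h9 : (9:Fin 10) ∈ S) : False := by
  refine useCycleW hbal cW0629 ?_ ?_ ?_
  · refine ⟨⟨⟨?_⟩, ?_⟩, ?_⟩ <;> simp [cW0629] <;> decide
  · intro x hx; simp [cW0629] at hx; rcases hx with rfl | rfl | rfl | rfl | rfl <;> assumption
  · simp only [cW0629, SimpleGraph.Walk.edges_cons, SimpleGraph.Walk.edges_nil]; decide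

lemma negcyc01729 {S : Set (Fin 10)} (hbal : BalancedSet GW σW S)
    (h0 : (0:Fin 10) ∈ S) (h1 : (1:Fin 10) ∈ S) (h2 : (2:Fin 10) ∈ S)
    (h7 : (7:Fin 10) ∈ S) (h9 : (9:Fin 10) ∈ S) : False := by
  refine useCycleW hbal cW01729 ?_ ?_ ?_
  · refine ⟨⟨⟨?_⟩, ?_⟩, ?_⟩ <;> simp [cW01729] <;> decide
  · intro x hx; simp [cW01729] at hx
    rcases hx with rfl | rfl | rfl | rfl | rfl | rfl <;> assumption
  · simp only [cW01729, SimpleGraph.Walk.edges_cons, SimpleGraph.Walk.edges_nil]; decide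

lemma negcyc06281 {S : Set (Fin 10)} (hbal : BalancedSet GW σW S)
    (h0 : (0:Fin 10) ∈ S) (h1 : (1:Fin 10) ∈ S) (h2 : (2:Fin 10) ∈ S)
    (h6 : (6:Fin 10) ∈ S) (h8 : (8:Fin 10) ∈ S) : False := by
  refine useCycleW hbal cW06281 ?_ ?_ ?_
  · refine ⟨⟨⟨?_⟩, ?_⟩, ?_⟩ <;> simp [cW06281] <;> decide
  · intro x hx; simp [cW06281] at hx
    rcases hx with rfl | rfl | rfl | rfl | rfl | rfl <;> assumption
  · simp only [cW06281, SimpleGraph.Walk.edges_cons, SimpleGraph.Walk.edges_nil]; decide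

/-- Every balanced set of `Ŵ` containing both `u` and `v` either contains all three vertices
of one of the positive triangles `ux₁x₂`, `vx₃x₄`, or is disjoint from one of the five
negative triangles `wx₁x₂`, `wx₁x₅`, `wx₃x₄`, `zx₂x₃`, `tx₄x₅`. -/
theorem stmt7 (S : Set (Fin 10)) (hbal : BalancedSet GW σW S)
    (hu : (0 : Fin 10) ∈ S) (hv : (1 : Fin 10) ∈ S) :
    ({0, 5, 6} : Set (Fin 10)) ⊆ S ∨ ({1, 7, 8} : Set (Fin 10)) ⊆ S ∨
    Disjoint S {2, 5, 6} ∨ Disjoint S {2, 5, 9} ∨ Disjoint S {2, 7, 8} ∨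
    Disjoint S {3, 6, 7} ∨ Disjoint S {4, 8, 9} := by
  by_contra hcon
  push_neg at hcon
  obtain ⟨hA, hB, d256, d259, d278, d367, d489⟩ := hcon
  have m256 := notDisjW d256
  have m259 := notDisjW d259
  have m278 := notDisjW d278
  have m367 := notDisjW d367
  have m489 := notDisjW d489
  have h56 : ¬((5:Fin 10) ∈ S ∧ (6:Fin 10) ∈ S) := by
    rintro ⟨h5, h6⟩
    apply hA
    intro x hx
    simp only [Set.mem_insert_iff, Set.mem_singleton_iff] at hx
    rcases hx with rfl | rfl | rfl <;> assumption
  have h78 : ¬((7:Fin 10) ∈ S ∧ (8:Fin 10) ∈ S) := by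
    rintro ⟨h7, h8⟩
    apply hB
    intro x hx
    simp only [Set.mem_insert_iff, Set.mem_singleton_iff] at hx
    rcases hx with rfl | rfl | rfl <;> assumption
  have n3 : (3:Fin 10) ∉ S := fun h3 => negcyc013 hbal hu hv h3
  have n4 : (4:Fin 10) ∉ S := fun h4 => negcyc014 hbal hu hv h4
  have h59 : ¬((5:Fin 10) ∈ S ∧ (9:Fin 10) ∈ S) :=
    fun ⟨h5, h9⟩ => negcyc059 hbal hu h5 h9
  have h67 : ¬((6:Fin 10) ∈ S ∧ (7:Fin 10) ∈ S) :=
    fun ⟨h6, h7⟩ => negcyc0671 hbal hu hv h6 h7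
  have h89 : ¬((8:Fin 10) ∈ S ∧ (9:Fin 10) ∈ S) :=
    fun ⟨h8, h9⟩ => negcyc0981 hbal hu hv h8 h9
  have h269 : ¬((2:Fin 10) ∈ S ∧ (6:Fin 10) ∈ S ∧ (9:Fin 10) ∈ S) :=
    fun ⟨h2, h6, h9⟩ => negcyc0629 hbal hu h2 h6 h9
  have h279 : ¬((2:Fin 10) ∈ S ∧ (7:Fin 10) ∈ S ∧ (9:Fin 10) ∈ S) :=
    fun ⟨h2, h7, h9⟩ => negcyc01729 hbal hu hv h2 h7 h9
  have h268 : ¬((2:Fin 10) ∈ S ∧ (6:Fin 10) ∈ S ∧ (8:Fin 10) ∈ S) :=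
    fun ⟨h2, h6, h8⟩ => negcyc06281 hbal hu hv h2 h6 h8
  rcases m489 with h4 | h8 | h9
  · exact n4 h4
  · -- case 8 ∈ S
    have n7 : (7:Fin 10) ∉ S := fun h7 => h78 ⟨h7, h8⟩
    rcases m367 with h3 | h6 | h7
    · exact n3 h3
    · rcases m259 with h2 | h5 | h9
      · exact h268 ⟨h2, h6, h8⟩
      · exact h56 ⟨h5, h6⟩
      · exact h89 ⟨h8, h9⟩
    · exact n7 h7
  · -- case 9 ∈ S
    have n8 : (8:Fin 10) ∉ S := fun h8 => h89 ⟨h8, h9⟩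
    have n5 : (5:Fin 10) ∉ S := fun h5 => h59 ⟨h5, h9⟩
    rcases m256 with h2 | h5 | h6
    · rcases m367 with h3 | h6 | h7
      · exact n3 h3
      · exact h269 ⟨h2, h6, h9⟩
      · exact h279 ⟨h2, h7, h9⟩
    · exact n5 h5
    · rcases m278 with h2 | h7 | h8
      · exact h269 ⟨h2, h6, h9⟩
      · exact h67 ⟨h6, h7⟩
      · exact n8 h8
end
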